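/- For the circular thermal network map f, suppose A = max{|1 − 2α − β − γ|, |1 − 2α − β|} + 2α < 1. Then V(x,x') = ‖x − x'‖ (sup norm) is a δ-GAS Lyapunov function for f on control vectors with values in [0,1], namely: for all x, x' : ZMod N → ℝ and all u with u(i) ∈ [0,1] for every i, one has ‖x − x'‖ ≤ V(x,x') ≤ ‖x − x'‖ and V(f(x,u), f(x',u)) − V(x,x') ≤ −(1 − A)·V(x,x'). -/

import Mathlib

/-- The circular thermal network map: room `i` interacts with rooms `i+1` and
`i-1` (cyclically), with the external environment at temperature `Te`, and with
its heater at temperature `Th` driven by the control `u i`. -/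
def thermal (N : ℕ) (α β γ Te Th : ℝ) (x u : ZMod N → ℝ) : ZMod N → ℝ :=
  fun i => x i + α * (x (i + 1) + x (i - 1) - 2 * x i)
    + β * (Te - x i) + γ * (Th - x i) * u i

/-
The difference of two trajectories driven by the same control evolves by the same map with the
sources `Te`, `Th` switched off. At room `i` that map is a combination of the three neighbouring
values with weights `1 - 2α - β - γ u i`, `α`, `α`; for `u i ∈ [0, 1]` the first weight is a convex
combination of `1 - 2α - β - γ` and `1 - 2α - β`, so the sup norm contracts by the factor `A`.
-/

theorem abs_sub_mul_le_max_abs {a b t : ℝ} (ht : t ∈ Set.Icc (0 : ℝ) 1) :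
    |a - b * t| ≤ max |a - b| |a| := by
  obtain ⟨ht0, ht1⟩ := ht
  calc |a - b * t| = |t * (a - b) + (1 - t) * a| := by ring_nf
    _ ≤ t * |a - b| + (1 - t) * |a| := by
      refine (abs_add_le _ _).trans_eq ?_
      rw [abs_mul, abs_mul, abs_of_nonneg ht0, abs_of_nonneg (sub_nonneg.2 ht1)]
    _ ≤ t * max |a - b| |a| + (1 - t) * max |a - b| |a| := by
      have h1 : 0 ≤ 1 - t := by linarith
      gcongr
      · exact le_max_left _ _
      · exact le_max_right _ _
    _ = max |a - b| |a| := by ring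

section Thermal

variable {N : ℕ} {α β γ : ℝ}

theorem thermal_sub_thermal (Te Th : ℝ) (x x' u : ZMod N → ℝ) :
    thermal N α β γ Te Th x u - thermal N α β γ Te Th x' u = thermal N α β γ 0 0 (x - x') u := by
  ext i
  simp only [thermal, Pi.sub_apply]
  ring

theorem thermal_zero_zero_apply (d u : ZMod N → ℝ) (i : ZMod N) :
    thermal N α β γ 0 0 d u i
      = (1 - 2 * α - β - γ * u i) * d i + α * d (i + 1) + α * d (i - 1) := by
  simp only [thermal]
  ring

theorem norm_thermal_zero_zero_le [NeZero N] (hα : 0 ≤ α) {u : ZMod N → ℝ}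
    (hu : ∀ i, u i ∈ Set.Icc (0 : ℝ) 1) (d : ZMod N → ℝ) :
    ‖thermal N α β γ 0 0 d u‖ ≤ (max |1 - 2 * α - β - γ| |1 - 2 * α - β| + 2 * α) * ‖d‖ := by
  set M := max |1 - 2 * α - β - γ| |1 - 2 * α - β|
  have hM : 0 ≤ M := (abs_nonneg _).trans (le_max_left _ _)
  refine pi_norm_le_iff_of_nonneg (by positivity) |>.2 fun i => ?_
  have hd : ∀ j, |d j| ≤ ‖d‖ := fun j => norm_le_pi_norm d j
  rw [Real.norm_eq_abs, thermal_zero_zero_apply]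
  calc |(1 - 2 * α - β - γ * u i) * d i + α * d (i + 1) + α * d (i - 1)|
      ≤ |1 - 2 * α - β - γ * u i| * |d i| + α * |d (i + 1)| + α * |d (i - 1)| := by
        refine (abs_add_three _ _ _).trans_eq ?_
        rw [abs_mul, abs_mul, abs_mul, abs_of_nonneg hα]
    _ ≤ M * ‖d‖ + α * ‖d‖ + α * ‖d‖ := by
        gcongr
        · exact abs_sub_mul_le_max_abs (hu i)
        · exact hd i
        · exact hd _
        · exact hd _
    _ = (M + 2 * α) * ‖d‖ := by ring

end Thermal

theorem stmt_7_general (N : ℕ) [NeZero N]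
    (α β γ Te Th : ℝ) (hα : 0 < α)
    (A : ℝ) (hA : A = max |1 - 2 * α - β - γ| |1 - 2 * α - β| + 2 * α)
    (V : (ZMod N → ℝ) → (ZMod N → ℝ) → ℝ)
    (hV : V = fun x x' => ‖x - x'‖) :
    ∀ (x x' : ZMod N → ℝ) (u : ZMod N → ℝ), (∀ i, u i ∈ Set.Icc (0 : ℝ) 1) →
      ‖x - x'‖ ≤ V x x' ∧ V x x' ≤ ‖x - x'‖ ∧
      V (thermal N α β γ Te Th x u) (thermal N α β γ Te Th x' u) - V x x'
        ≤ -((1 - A) * V x x') := by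
  subst hV hA
  intro x x' u hu
  refine ⟨le_rfl, le_rfl, ?_⟩
  have hcontract := norm_thermal_zero_zero_le (β := β) (γ := γ) hα.le hu (x - x')
  rw [← thermal_sub_thermal Te Th] at hcontract
  linarith

theorem stmt_7 (N : ℕ) [NeZero N] (hN : 3 ≤ N)
    (α β γ Te Th : ℝ) (hα : 0 < α) (hβ : 0 < β) (hγ : 0 < γ)
    (A : ℝ) (hA : A = max |1 - 2 * α - β - γ| |1 - 2 * α - β| + 2 * α)
    (hA1 : A < 1)
    (V : (ZMod N → ℝ) → (ZMod N → ℝ) → ℝ)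
    (hV : V = fun x x' => ‖x - x'‖) :
    ∀ (x x' : ZMod N → ℝ) (u : ZMod N → ℝ), (∀ i, u i ∈ Set.Icc (0 : ℝ) 1) →
      ‖x - x'‖ ≤ V x x' ∧ V x x' ≤ ‖x - x'‖ ∧
      V (thermal N α β γ Te Th x u) (thermal N α β γ Te Th x' u) - V x x'
        ≤ -((1 - A) * V x x') :=
  stmt_7_general N α β γ Te Th hα A hA V hV
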